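/- arXiv:2403.18145 — 3 statements merged into one kernel-verified Lean document; each statement's English description precedes it below -/
import Mathlib

section
/- For a path represented as a temporally strictly increasing sequence of timed locations, the satisfaction round of the k-th vertex in the execution of the associated precedence graph is at most the planned timestep t_k. -/
def sat {V : Type*} (E : V → V → Prop) (S : Set V) : ℕ → V → Prop
  | 0, v => v ∈ S
  | t + 1, v => sat E S t v ∨ ∀ u, E u v → sat E S t u

def pathFrom {V : Type*} (E : V → V → Prop) (S : Set V) (v : V) (n : ℕ) : Prop :=
  ∃ f : ℕ → V, f 0 ∈ S ∧ f n = v ∧ ∀ i < n, E (f i) (f (i + 1))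

noncomputable def lpath {V : Type*} (E : V → V → Prop) (S : Set V) (v : V) : ℕ :=
  sSup {n | pathFrom E S v n}

lemma sat_mono {V : Type*} (E : V → V → Prop) (S : Set V) :
    ∀ {s t : ℕ}, s ≤ t → ∀ v, sat E S s v → sat E S t v := by
  intro s t h
  induction t with
  | zero => intro v hv; obtain rfl : s = 0 := Nat.le_zero.mp h; exact hv
  | succ t ih =>
    intro v hv
    rcases Nat.le_succ_iff.mp h with h' | rfl
    · exact Or.inl (ih h' v hv)
    · exact hv

/-- For a TPG built from a MAPF solution, with each vertex labeled by its planned timestep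
`ℓ` (so every edge strictly increases `ℓ`, and exactly the timestep-0 vertices are start
vertices), every vertex `v` is satisfied by round `ℓ v` in the synchronous execution. -/
theorem stmt11 {V : Type*} (E : V → V → Prop) (ℓ : V → ℕ)
    (hedge : ∀ u v, E u v → ℓ u < ℓ v) :
    ∀ v, sat E {w | ℓ w = 0} (ℓ v) v := by
  suffices H : ∀ t v, ℓ v = t → sat E {w | ℓ w = 0} t v by
    intro v; exact (H (ℓ v) v rfl)
  intro t
  induction t using Nat.strong_induction_on with
  | _ t ih =>
    intro v h
    cases t with
    | zero => exact h
    | succ t =>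
      refine Or.inr fun u hu => ?_
      have hlt : ℓ u < t + 1 := h ▸ hedge u v hu
      exact sat_mono E _ (Nat.lt_succ_iff.mp hlt) u
        (by simpa using ih (ℓ u) hlt u rfl)
end

section
/- If in a DAG with sources every switchable candidate edge (u, v) satisfies lp(u) < lp(v), then adding all these edges simultaneously yields an acyclic graph with the same longest-path values for all vertices. -/
lemma chainTrans {V : Type*} {E : V → V → Prop} {f : ℕ → V} {n : ℕ}
    (hf : ∀ i < n, E (f i) (f (i + 1))) :
    ∀ j, j ≤ n → ∀ i, i < j → Relation.TransGen E (f i) (f j) := by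
  intro j
  induction j with
  | zero => intro _ i hi; omega
  | succ j ih =>
    intro hj i hi
    rcases Nat.lt_or_ge i j with h | h
    · exact (ih (by omega) i h).tail (hf j (by omega))
    · have : i = j := by omega
      subst this
      exact Relation.TransGen.single (hf i (by omega))

lemma path_bdd {V : Type*} [Fintype V] {E : V → V → Prop} {S : Set V}
    (hacyc : ∀ v, ¬ Relation.TransGen E v v) {n : ℕ} {v : V}
    (h : pathFrom E S v n) : n ≤ Fintype.card V := by
  obtain ⟨f, h0, hn, hf⟩ := h
  by_contra hc
  push_neg at hc
  have hninj : ¬ Function.Injective (fun i : Fin (n + 1) => f i) := by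
    intro hinj
    have := Fintype.card_le_of_injective _ hinj
    simp [Fintype.card_fin] at this
    omega
  rw [Function.not_injective_iff] at hninj
  obtain ⟨a, b, hab, hne⟩ := hninj
  rcases Ne.lt_or_gt hne with hlt | hlt
  · exact hacyc (f a) (hab ▸ chainTrans hf b (by omega) a hlt)
  · exact hacyc (f b) (hab ▸ chainTrans hf a (by omega) b hlt)

lemma lpath_bddAbove {V : Type*} [Fintype V] {E : V → V → Prop} {S : Set V}
    (hacyc : ∀ v, ¬ Relation.TransGen E v v) (v : V) :
    BddAbove {n | pathFrom E S v n} :=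
  ⟨Fintype.card V, fun _ hn => path_bdd hacyc hn⟩

lemma lpath_mem {V : Type*} [Fintype V] {E : V → V → Prop} {S : Set V}
    (hacyc : ∀ v, ¬ Relation.TransGen E v v)
    (hreach : ∀ w, ∃ n, pathFrom E S w n) (v : V) :
    pathFrom E S v (lpath E S v) :=
  Nat.sSup_mem (hreach v) (lpath_bddAbove hacyc v)

lemma lpath_edge {V : Type*} [Fintype V] {E : V → V → Prop} {S : Set V}
    (hacyc : ∀ v, ¬ Relation.TransGen E v v)
    (hreach : ∀ w, ∃ n, pathFrom E S w n) {u v : V} (huv : E u v) :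
    lpath E S u < lpath E S v := by
  obtain ⟨f, h0, hm, hf⟩ := lpath_mem hacyc hreach u
  set m := lpath E S u with hmdef
  have hmem : pathFrom E S v (m + 1) := by
    refine ⟨fun i => if i = m + 1 then v else f i, ?_, ?_, ?_⟩
    · simp [h0]
    · simp
    · intro i hi
      rcases Nat.lt_or_ge i m with h | h
      · simp only [show i ≠ m + 1 by omega, show i + 1 ≠ m + 1 by omega, if_neg,
          if_false]
        simpa using hf i h
      · have : i = m := by omega
        subst this
        simpa [hm, show m ≠ m + 1 by omega] using huv
  calc m < m + 1 := by omega
    _ ≤ lpath E S v := le_csSup (lpath_bddAbove hacyc v) hmem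

/-- If every candidate edge `(u, v)` of `F` satisfies `lpath u < lpath v` in the DAG `E` (sources
`S`, all vertices reachable), then adding all edges of `F` simultaneously yields an acyclic
graph with unchanged longest-path values. -/
theorem stmt15 {V : Type*} [Fintype V] (E F : V → V → Prop) (S : Set V)
    (hacyc : ∀ v, ¬ Relation.TransGen E v v)
    (hreach : ∀ w, ∃ n, pathFrom E S w n)
    (hF : ∀ u v, F u v → lpath E S u < lpath E S v) :
    (∀ w, ¬ Relation.TransGen (fun a b => E a b ∨ F a b) w w) ∧
      ∀ w, lpath (fun a b => E a b ∨ F a b) S w = lpath E S w := by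
  set E' := fun a b => E a b ∨ F a b with hE'
  have hedge : ∀ u v, E' u v → lpath E S u < lpath E S v := by
    intro u v huv
    rcases huv with h | h
    · exact lpath_edge hacyc hreach h
    · exact hF u v h
  have htrans : ∀ u v, Relation.TransGen E' u v → lpath E S u < lpath E S v := by
    intro u v h
    induction h with
    | single h => exact hedge _ _ h
    | tail _ h ih => exact ih.trans (hedge _ _ h)
  have hacyc' : ∀ w, ¬ Relation.TransGen E' w w := fun w h =>
    lt_irrefl _ (htrans w w h)
  refine ⟨hacyc', fun w => ?_⟩
  -- any E'-path of length n ending at v has n ≤ lpath E S v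
  have hbound : ∀ n, pathFrom E' S w n → n ≤ lpath E S w := by
    rintro n ⟨f, h0, hn, hf⟩
    have key : ∀ i, i ≤ n → i ≤ lpath E S (f i) := by
      intro i
      induction i with
      | zero => intro _; omega
      | succ i ih =>
        intro hi
        have h1 := ih (by omega)
        have h2 := hedge _ _ (hf i (by omega))
        omega
    have := key n le_rfl
    rwa [hn] at this
  have hsub : {n | pathFrom E S w n} ⊆ {n | pathFrom E' S w n} := by
    rintro n ⟨f, h0, hn, hf⟩
    exact ⟨f, h0, hn, fun i hi => Or.inl (hf i hi)⟩
  have hbdd' : BddAbove {n | pathFrom E' S w n} :=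
    ⟨lpath E S w, fun n hn => hbound n hn⟩
  have hne' : {n | pathFrom E' S w n}.Nonempty := by
    obtain ⟨n, hn⟩ := hreach w
    exact ⟨n, hsub hn⟩
  apply le_antisymm
  · exact csSup_le hne' fun n hn => hbound n hn
  · exact le_csSup hbdd' (hsub (lpath_mem hacyc hreach w))
end

section
/- In the synchronous execution of a TPG constructed from a collision-free MAPF solution, no two agents are ever at the same location at the same round. -/
theorem sat_pred {ι : Type*} (E : ι × ℕ → ι × ℕ → Prop)
    (hS : ∀ u i, ¬ E u (i, 0)) :
    ∀ t (v u : ι × ℕ), sat E {p | p.2 = 0} t v → E u v → sat E {p | p.2 = 0} t u := by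
  intro t
  induction t with
  | zero =>
    intro v u hv he
    exact absurd (by rw [show v = (v.1, 0) from Prod.ext rfl hv] at he; exact he) (hS u v.1)
  | succ t ih =>
    intro v u hv he
    rcases hv with hv | hv
    · exact Or.inl (ih v u hv he)
    · exact Or.inl (hv u he)

/-- In the synchronous execution of a TPG constructed from a collision-free MAPF solution,
no two agents are ever at the same location at the same round: if `(i, k)` and `(j, s)` are
the latest satisfied vertices of distinct agents `i` and `j` at round `t`, then the
corresponding locations differ. -/
theorem stmt18 {ι L : Type*} [Fintype ι] (E : ι × ℕ → ι × ℕ → Prop)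
    (z : ι → ℕ) (loc : ι → ℕ → L)
    (hchain : ∀ i k, k < z i → E (i, k) (i, k + 1))
    (hS : ∀ u i, ¬ E u (i, 0))
    (horder : ∀ i j k s, i ≠ j → k ≤ z i → s ≤ z j → loc i k = loc j s →
      (k < z i ∧ E (i, k + 1) (j, s)) ∨ (s < z j ∧ E (j, s + 1) (i, k)))
    (t : ℕ) (i j : ι) (k s : ℕ) (hij : i ≠ j) (hk : k ≤ z i) (hs : s ≤ z j)
    (hsatI : sat E {p | p.2 = 0} t (i, k))
    (hlastI : k = z i ∨ ¬ sat E {p | p.2 = 0} t (i, k + 1))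
    (hsatJ : sat E {p | p.2 = 0} t (j, s))
    (hlastJ : s = z j ∨ ¬ sat E {p | p.2 = 0} t (j, s + 1)) :
    loc i k ≠ loc j s := by
  intro heq
  rcases horder i j k s hij hk hs heq with ⟨hlt, he⟩ | ⟨hlt, he⟩
  · have := sat_pred E hS t (j, s) (i, k + 1) hsatJ he
    rcases hlastI with h | h
    · exact absurd h (Nat.ne_of_lt hlt)
    · exact h this
  · have := sat_pred E hS t (i, k) (j, s + 1) hsatI he
    rcases hlastJ with h | h
    · exact absurd h (Nat.ne_of_lt hlt)
    · exact h this
end
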